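/- Let E be the open unit disk, G : closure(E) → ℝ² continuous, injective on E ∪ {o} for some o ∈ ∂E, with G(E) = Ω open and G(o) = y ∈ ∂Ω. Let c : E ∪ {o} → ℝ be continuous at o. If f : Ω ∪ {y} → ℝ is defined by f(G(w)) = c(w), and for every sequence of neighborhoods there exist σᵢ > 0 with {x ∈ Ω : |x - y| < σᵢ} ⊂ G(B_{ρᵢ}(o)) where osc(c on B_{ρᵢ}(o) ∩ E) → 0, then f is continuous at y. -/
import Mathlib


open Set Filter Metric

theorem stmt14 (E : Set (ℝ × ℝ)) (hE : E = Metric.ball (0 : ℝ × ℝ) 1)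
    (o : ℝ × ℝ) (ho : o ∈ frontier E)
    (G : ℝ × ℝ → ℝ × ℝ) (hGcont : ContinuousOn G (closure E))
    (hGinj : Set.InjOn G (E ∪ {o}))
    (Ω : Set (ℝ × ℝ)) (hΩopen : IsOpen Ω) (hΩ : G '' E = Ω)
    (y : ℝ × ℝ) (hy : G o = y) (hyb : y ∈ frontier Ω)
    (c : ℝ × ℝ → ℝ) (hc : ContinuousWithinAt c (E ∪ {o}) o)
    (f : ℝ × ℝ → ℝ) (hfc : ∀ w ∈ E ∪ {o}, f (G w) = c w)
    (ρ σ η : ℕ → ℝ)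
    (hρ : ∀ i, 0 < ρ i) (hσ : ∀ i, 0 < σ i)
    (hsub : ∀ i, {x ∈ Ω | ‖x - y‖ < σ i} ⊆ G '' (Metric.ball o (ρ i) ∩ E))
    (hosc : ∀ i, ∀ w₁ ∈ Metric.ball o (ρ i) ∩ (E ∪ {o}),
      ∀ w₂ ∈ Metric.ball o (ρ i) ∩ (E ∪ {o}), |c w₁ - c w₂| ≤ η i)
    (hη : Filter.Tendsto η Filter.atTop (nhds 0)) :
    ContinuousWithinAt f (Ω ∪ {y}) y := by
  rw [Metric.continuousWithinAt_iff]
  intro ε hε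
  obtain ⟨i, hi⟩ := (hη.eventually (gt_mem_nhds hε)).exists
  refine ⟨σ i, hσ i, ?_⟩
  intro x hx hxd
  rcases hx with hx | hx
  · have hx' : x ∈ {x ∈ Ω | ‖x - y‖ < σ i} := ⟨hx, by rwa [← dist_eq_norm]⟩
    obtain ⟨w, ⟨hwball, hwE⟩, rfl⟩ := hsub i hx'
    rw [hfc w (Or.inl hwE), ← hy, hfc o (Or.inr rfl)]
    have h := hosc i w ⟨hwball, Or.inl hwE⟩ o ⟨Metric.mem_ball_self (hρ i), Or.inr rfl⟩
    calc dist (c w) (c o) = |c w - c o| := Real.dist_eq _ _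
      _ ≤ η i := h
      _ < ε := hi
  · rw [Set.mem_singleton_iff] at hx
    simp [hx, hε]
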